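/- Let D_n ∈ C_n be a configuration containing at least one atom with second coordinate strictly greater than e_S. Let h := max{x₂ : (x₁, x₂) ∈ D_n} (so h > e_S), let L := ℝ × {h} be the topmost occupied horizontal line, and let ℓ := #(D_n ∩ L). Then V_n(D_n) ≥ V_{n−ℓ}(D_n \ L) − 6c_F(ℓ − 1) − 4c_F, where V_{n−ℓ} denotes the same energy functional applied to the configuration D_n \ L with n − ℓ atoms. -/

import Mathlib

open scoped BigOperators Classical Topology ENNReal
open Filter MeasureTheory

noncomputable section

/-!
Common setting: film lattice `L_F` with parameter `e_F = 1`, substrate spacing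
`e_S = q/p` (`p, q` coprime positive integers), Heitmann–Radin potentials and the
configurational energy `V_n` (with values in `EReal`, since the Heitmann–Radin
potential takes the value `+∞` below distance `1`).
-/

/-- Points of the plane. -/
abbrev Pt : Type := ℝ × ℝ

/-- The lattice vector `t₁ = (1,0)`. -/
def t1 : Pt := ((1 : ℝ), (0 : ℝ))

/-- The lattice vector `t₂ = (1/2, √3/2)`. -/
def t2 : Pt := ((1 / 2 : ℝ), Real.sqrt 3 / 2)

/-- Euclidean distance on `ℝ × ℝ`. -/
def dE (x y : Pt) : ℝ := Real.sqrt ((x.1 - y.1) ^ 2 + (x.2 - y.2) ^ 2)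

/-- Substrate lattice spacing `e_S = q / p`. -/
def eS (p q : ℕ) : ℝ := (q : ℝ) / (p : ℝ)

/-- The film lattice `L_F = {(0, e_S) + k₁ t₁ + k₂ t₂ : k₁ ∈ ℤ, k₂ ∈ ℕ ∪ {0}}`. -/
def LF (p q : ℕ) : Set Pt :=
  {x | ∃ (k₁ : ℤ) (k₂ : ℕ), x = (((0 : ℝ), eS p q) : Pt) + (k₁ : ℝ) • t1 + (k₂ : ℝ) • t2}

/-- The set `∂L_{FS} = {(k q, e_S) : k ∈ ℤ}` of lower-boundary film sites lying at
distance `e_S` above a substrate atom. -/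
def bLFS (p q : ℕ) : Set Pt := {x | ∃ k : ℤ, x = (((k : ℝ) * (q : ℝ), eS p q) : Pt)}

/-- Crystalline configurations with `n` atoms: subsets of `L_F` of cardinality `n`. -/
def Cn (p q n : ℕ) : Set (Finset Pt) := {D | ↑D ⊆ LF p q ∧ D.card = n}

/-- The Heitmann–Radin sticky-disc potential: `+∞` for `r < 1`, `-c_F` at `r = 1`,
`0` for `r > 1`. -/
def vF (cF : ℝ) (r : ℝ) : EReal :=
  if r < 1 then (⊤ : EReal) else if r = 1 then ((-cF : ℝ) : EReal) else (0 : EReal)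

/-- The one-body substrate potential `v¹`: `-c_S` on `∂L_{FS}`, `0` otherwise. -/
def v1 (cS : ℝ) (p q : ℕ) (x : Pt) : ℝ := if x ∈ bLFS p q then -cS else 0

/-- The total energy `V_n(D) = Σ_{(x,y) ∈ D×D, x ≠ y} v_F(|x-y|) + Σ_{x ∈ D} v¹(x)`. -/
def Vn (cF cS : ℝ) (p q : ℕ) (D : Finset Pt) : EReal :=
  (∑ e ∈ D.offDiag, vF cF (dE e.1 e.2)) + (((∑ x ∈ D, v1 cS p q x) : ℝ) : EReal)

/-- The dewetting condition: `c_S < 4c_F` if `q = 1` and `c_S < 6c_F` if `q ≠ 1`. -/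
def Dewetting (cF cS : ℝ) (q : ℕ) : Prop := if q = 1 then cS < 4 * cF else cS < 6 * cF

/-- The boundary `∂D` of a configuration: atoms with fewer than `6` film neighbours. -/
def bdry (D : Finset Pt) : Finset Pt :=
  D.filter fun x => (D.filter fun y => dE x y = 1).card < 6

/-- The empirical measure `μ_{D_n} = (1/n) Σ_{x ∈ D_n} δ_{x/√n}`. -/
def emp (n : ℕ) (D : Finset Pt) : Measure Pt :=
  ((n : ℝ≥0∞))⁻¹ • ∑ x ∈ D, Measure.dirac (((Real.sqrt n)⁻¹ : ℝ) • x)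

/-- A configuration of `n` consecutive sites `{w, w + t₁, …, w + (n-1) t₁}` on `∂L_{FS}`. -/
def IsConsecutive (p q n : ℕ) (Dw : Finset Pt) : Prop :=
  ∃ w : Pt, w ∈ bLFS p q ∧ Dw = (Finset.range n).image fun i => w + (i : ℝ) • t1

/-- Two atoms joined by a chain of atoms of `D` with consecutive distances `1`. -/
def chainConn (D : Finset Pt) (x y : Pt) : Prop :=
  Relation.ReflTransGen (fun a b => a ∈ D ∧ b ∈ D ∧ dE a b = 1) x y

/-- Connectedness of a configuration. -/
def IsConnectedConf (D : Finset Pt) : Prop := ∀ x ∈ D, ∀ y ∈ D, chainConn D x y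

/-- `C` is a connected component of `D` (the set of atoms of `D` chain-connected to
some atom of `D`). -/
def IsComponent (D C : Finset Pt) : Prop :=
  ∃ x ∈ D, ∀ y : Pt, y ∈ C ↔ y ∈ D ∧ chainConn D x y

/-- Almost-connectedness: connected if `q = 1`; if `q ≠ 1`, the connected components
can be enumerated so that each one is at distance at most `q` from the union of the
previous ones. -/
def AlmostConnected (q : ℕ) (D : Finset Pt) : Prop :=
  if q = 1 then IsConnectedConf D
  else
    ∃ (k : ℕ) (f : Fin k → Finset Pt),
      Function.Injective f ∧
      (∀ i, IsComponent D (f i)) ∧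
      (∀ C : Finset Pt, IsComponent D C → ∃ i, C = f i) ∧
      (∀ i : Fin k, 1 ≤ (i : ℕ) →
        ∃ x ∈ f i, ∃ j : Fin k, j < i ∧ ∃ y ∈ f j, dE x y ≤ (q : ℝ))

/-- Local energy `E_loc(x)` of a site with respect to the configuration `D`. -/
def Eloc (cF : ℝ) (D : Finset Pt) (x : Pt) : ℝ :=
  if x ∈ D then cF * (6 - ((D.filter fun y => dE x y = 1).card : ℝ)) else 0

/-- Height `y_M` of the topmost atom of `D` in the column of `x`. -/
def yM (D : Finset Pt) (x : Pt) : ℝ := sSup {y : ℝ | ((x.1, y) : Pt) ∈ D}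

/-- The strip top `x̃ = (x¹, y_M)`. -/
def til (D : Finset Pt) (x : Pt) : Pt := (x.1, yM D x)

/-- The weight `w₊(x̃)`. -/
def wPlus (p q : ℕ) (D : Finset Pt) (x : Pt) : ℝ :=
  if x + t1 ∈ D ∧ x + t1 ∈ bLFS p q ∧ til D x + t2 = til D (x + t1) + t2 - t1 then 1 / 2 else 1

/-- The weight `w₋(x̃)`. -/
def wMinus (p q : ℕ) (D : Finset Pt) (x : Pt) : ℝ :=
  if x - t1 ∈ D ∧ x - t1 ∈ bLFS p q ∧ til D x + t2 - t1 = til D (x - t1) + t2 then 1 / 2 else 1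

/-- Lower strip energy `E_strip,below(x)`. -/
def EStripBelow (cF cS : ℝ) (p q : ℕ) (D : Finset Pt) (x : Pt) : ℝ :=
  if q = 1 then
    (1 / 2) * Eloc cF D x + (1 / 4) * Eloc cF D (x + t1) + (1 / 4) * Eloc cF D (x - t1) - cS
  else
    Eloc cF D x + (1 / 2) * Eloc cF D (x + t1) + (1 / 2) * Eloc cF D (x - t1) - cS

/-- Upper strip energy `E_strip,above(x)`. -/
def EStripAbove (cF : ℝ) (p q : ℕ) (D : Finset Pt) (x : Pt) : ℝ :=
  (if til D x ≠ x then Eloc cF D (til D x) else 0) +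
    wPlus p q D x * Eloc cF D (til D x + t2) +
    wMinus p q D x * Eloc cF D (til D x + t2 - t1)

/-- The strip energy `E_strip(x) = E_strip,below(x) + E_strip,above(x)`. -/
def EStrip (cF cS : ℝ) (p q : ℕ) (D : Finset Pt) (x : Pt) : ℝ :=
  EStripBelow cF cS p q D x + EStripAbove cF p q D x

/-- `Δ_strip`: `4c_F - c_S` if `q = 1`, `6c_F - c_S` if `q ≠ 1`. -/
def DeltaStrip (cF cS : ℝ) (q : ℕ) : ℝ := if q = 1 then 4 * cF - cS else 6 * cF - cS

/-- The union `S(∂L_{FS})` of all strips of the configuration `D`. -/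
def SLFS (p q : ℕ) (D : Finset Pt) : Finset Pt :=
  D.filter fun y => ∃ x, x ∈ D ∧ x ∈ bLFS p q ∧
    (y = x ∨ y = x + t1 ∨ y = x - t1 ∨ y = til D x ∨ y = til D x + t2 ∨ y = til D x + t2 - t1)

/-- The rescaled energy `E_n(μ_{D_n}) = n^{-1/2} (V_n(D_n) + 6 c_F n)`. -/
def En (cF cS : ℝ) (p q n : ℕ) (D : Finset Pt) : EReal :=
  ((((Real.sqrt n)⁻¹ : ℝ)) : EReal) * (Vn cF cS p q D + ((6 * cF * (n : ℝ) : ℝ) : EReal))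

/-!
Deleting the top line `L` only removes pair interactions involving an atom of `L`; the substrate
term does not change because `L` lies strictly above height `e_S`. Each removed pair contributes
at least `-c_F` if it is a bond and at least `0` otherwise. Since nothing lies above `L`, an atom
of `L` can only be bonded to its two horizontal neighbours and to the two lattice sites below it.
Orienting every bond that meets `L` either rightwards inside `L` or downwards out of `L` gives at
most `(ℓ - 1) + 2ℓ` bonds, hence at most `6ℓ - 2 = 6(ℓ - 1) + 4` ordered pairs.
-/

open Finset

lemma dE_comm (x y : Pt) : dE x y = dE y x := by
  unfold dE; congr 1; ring

lemma dE_eq_one_iff {x y : Pt} : dE x y = 1 ↔ (x - y).1 ^ 2 + (x - y).2 ^ 2 = 1 := by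
  simp [dE, Real.sqrt_eq_one]

lemma exists_int_sub_eq_of_mem_LF {p q : ℕ} {x y : Pt} (hx : x ∈ LF p q) (hy : y ∈ LF p q) :
    ∃ a b : ℤ, x - y = (a : ℝ) • t1 + (b : ℝ) • t2 := by
  obtain ⟨k₁, k₂, rfl⟩ := hx
  obtain ⟨m₁, m₂, rfl⟩ := hy
  refine ⟨k₁ - m₁, k₂ - m₂, ?_⟩
  push_cast
  module

-- `a • t1 + b • t2` has squared length `a ^ 2 + a * b + b ^ 2`.
lemma int_sq_add_mul_add_sq_eq_one {a b : ℤ} (hb : 0 ≤ b) (h : a ^ 2 + a * b + b ^ 2 = 1) :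
    a = 1 ∧ b = 0 ∨ a = -1 ∧ b = 0 ∨ a = 0 ∧ b = 1 ∨ a = -1 ∧ b = 1 := by
  have hb1 : b ≤ 1 := by nlinarith [sq_nonneg (2 * a + b)]
  have ha1 : a ≤ 1 := by nlinarith [sq_nonneg (a + 2 * b)]
  have ha2 : -1 ≤ a := by nlinarith [sq_nonneg (a + 2 * b)]
  interval_cases b <;> interval_cases a <;> simp_all

lemma eq_of_mem_LF_of_dE_eq_one {p q : ℕ} {x y : Pt} (hx : x ∈ LF p q) (hy : y ∈ LF p q)
    (hle : y.2 ≤ x.2) (hd : dE x y = 1) :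
    y = x - t1 ∨ y = x + t1 ∨ y = x - t2 ∨ y = x - t2 + t1 := by
  obtain ⟨a, b, hab⟩ := exists_int_sub_eq_of_mem_LF hx hy
  have hsqrt3 : Real.sqrt 3 ^ 2 = 3 := Real.sq_sqrt (by norm_num)
  have h1 : (x - y).1 = a + b / 2 := by
    rw [hab]; simp only [t1, t2, Prod.fst_add, Prod.smul_fst, smul_eq_mul]; ring
  have h2 : (x - y).2 = b * (Real.sqrt 3 / 2) := by rw [hab]; simp [t1, t2]
  have hb : 0 ≤ b := by
    have : (0 : ℝ) ≤ b * (Real.sqrt 3 / 2) := by rw [← h2, Prod.snd_sub]; linarith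
    exact_mod_cast nonneg_of_mul_nonneg_left this (by positivity)
  have hnorm : a ^ 2 + a * b + b ^ 2 = 1 := by
    have := dE_eq_one_iff.mp hd
    rw [h1, h2] at this
    have hreal : (a : ℝ) ^ 2 + a * b + b ^ 2 = 1 := by
      linear_combination this - (b ^ 2 / 4 : ℝ) * hsqrt3
    exact_mod_cast hreal
  have hy' : y = x - ((a : ℝ) • t1 + (b : ℝ) • t2) := by rw [← hab]; abel
  rcases int_sq_add_mul_add_sq_eq_one hb hnorm with
    ⟨rfl, rfl⟩ | ⟨rfl, rfl⟩ | ⟨rfl, rfl⟩ | ⟨rfl, rfl⟩ <;> rw [hy'] <;> push_cast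
  · exact Or.inl (by module)
  · exact Or.inr (Or.inl (by module))
  · exact Or.inr (Or.inr (Or.inl (by module)))
  · exact Or.inr (Or.inr (Or.inr (by module)))

lemma ite_le_vF (cF r : ℝ) : ((if r = 1 then -cF else 0 : ℝ) : EReal) ≤ vF cF r := by
  rcases lt_trichotomy r 1 with hr | hr | hr
  · simp [vF, hr, ne_of_lt hr]
  · simp [vF, hr]
  · simp [vF, not_lt.mpr hr.le, ne_of_gt hr]

lemma EReal.coe_finset_sum {ι : Type*} (s : Finset ι) (f : ι → ℝ) :
    ((∑ i ∈ s, f i : ℝ) : EReal) = ∑ i ∈ s, (f i : EReal) :=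
  map_sum (⟨⟨Real.toEReal, EReal.coe_zero⟩, EReal.coe_add⟩ : ℝ →+ EReal) f s

-- `a₀` stands for the rightmost atom of `L`, which has no right neighbour in `L`.
def lineBonds (L : Finset Pt) (a₀ : Pt) : Finset (Pt × Pt) :=
  (L.erase a₀).image (fun a => (a, a + t1)) ∪ L.image (fun a => (a, a - t2)) ∪
    L.image (fun a => (a, a - t2 + t1))

lemma card_lineBonds_le {L : Finset Pt} {a₀ : Pt} (ha₀ : a₀ ∈ L) :
    (lineBonds L a₀).card ≤ (L.card - 1) + L.card + L.card := by
  rw [← card_erase_of_mem ha₀]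
  exact (card_union_le _ _).trans <| add_le_add ((card_union_le _ _).trans <|
    add_le_add card_image_le card_image_le) card_image_le

lemma mem_lineBonds_of_dE_eq_one {p q : ℕ} {D : Finset Pt} {h : ℝ} {a₀ x y : Pt}
    (hD : ↑D ⊆ LF p q) (hub : ∀ z ∈ D, z.2 ≤ h)
    (ha₀ : ∀ z ∈ D.filter (fun z => z.2 = h), z.1 ≤ a₀.1)
    (hx : x ∈ D) (hxh : x.2 = h) (hy : y ∈ D) (hd : dE x y = 1) :
    (x, y) ∈ lineBonds (D.filter fun z => z.2 = h) a₀ ∨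
      (y, x) ∈ lineBonds (D.filter fun z => z.2 = h) a₀ := by
  have hxL : x ∈ D.filter (fun z => z.2 = h) := mem_filter.2 ⟨hx, hxh⟩
  simp only [lineBonds, mem_union, mem_image, mem_erase, Prod.mk.injEq]
  rcases eq_of_mem_LF_of_dE_eq_one (hD hx) (hD hy) (hxh ▸ hub y hy) hd with rfl | rfl | rfl | rfl
  · have hyL : x - t1 ∈ D.filter (fun z => z.2 = h) :=
      mem_filter.2 ⟨hy, by simpa [t1] using hxh⟩
    refine Or.inr (Or.inl (Or.inl ⟨x - t1, ⟨?_, hyL⟩, rfl, by abel⟩))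
    rintro rfl
    have := ha₀ x hxL
    norm_num [t1] at this
  · have hyL : x + t1 ∈ D.filter (fun z => z.2 = h) :=
      mem_filter.2 ⟨hy, by simpa [t1] using hxh⟩
    refine Or.inl (Or.inl (Or.inl ⟨x, ⟨?_, hxL⟩, rfl, rfl⟩))
    rintro rfl
    have := ha₀ _ hyL
    norm_num [t1] at this
  · exact Or.inl (Or.inl (Or.inr ⟨x, hxL, rfl, rfl⟩))
  · exact Or.inl (Or.inr ⟨x, hxL, rfl, rfl⟩)

lemma card_bonds_meeting_top_line_le {p q : ℕ} {D : Finset Pt} {h : ℝ}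
    (hD : ↑D ⊆ LF p q) (hub : ∀ x ∈ D, x.2 ≤ h)
    (hL : (D.filter fun x => x.2 = h).Nonempty) :
    ((D.offDiag \ (D.filter fun x => x.2 ≠ h).offDiag).filter fun e => dE e.1 e.2 = 1).card ≤
      6 * ((D.filter fun x => x.2 = h).card - 1) + 4 := by
  set L := D.filter fun x => x.2 = h
  obtain ⟨a₀, ha₀L, ha₀⟩ := L.exists_max_image Prod.fst hL
  have hsub : ((D.offDiag \ (D.filter fun x => x.2 ≠ h).offDiag).filter
      fun e => dE e.1 e.2 = 1) ⊆ lineBonds L a₀ ∪ (lineBonds L a₀).image Prod.swap := by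
    rintro ⟨x, y⟩ hxy
    obtain ⟨hxy, hd⟩ := mem_filter.1 hxy
    obtain ⟨hxy, hnot⟩ := mem_sdiff.1 hxy
    obtain ⟨hx, hy, hne⟩ := mem_offDiag.1 hxy
    rw [mem_offDiag] at hnot
    rw [mem_union]
    by_cases hxh : x.2 = h
    · rcases mem_lineBonds_of_dE_eq_one hD hub ha₀ hx hxh hy hd with h' | h'
      · exact Or.inl h'
      · exact Or.inr (mem_image_of_mem Prod.swap h')
    · have hyh : y.2 = h := by
        by_contra hyh
        exact hnot ⟨mem_filter.2 ⟨hx, hxh⟩, mem_filter.2 ⟨hy, hyh⟩, hne⟩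
      rcases mem_lineBonds_of_dE_eq_one hD hub ha₀ hy hyh hx ((dE_comm y x).trans hd) with h' | h'
      · exact Or.inr (mem_image_of_mem Prod.swap h')
      · exact Or.inl h'
  have hB := card_lineBonds_le ha₀L
  have hL1 : 1 ≤ L.card := card_pos.2 hL
  calc _ ≤ (lineBonds L a₀ ∪ (lineBonds L a₀).image Prod.swap).card := card_le_card hsub
    _ ≤ (lineBonds L a₀).card + (lineBonds L a₀).card :=
      (card_union_le _ _).trans (add_le_add le_rfl card_image_le)
    _ ≤ 6 * (L.card - 1) + 4 := by omega

lemma sum_vF_ge {ι : Type*} (cF : ℝ) (s : Finset ι) (r : ι → ℝ) :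
    ((-(cF * (s.filter fun i => r i = 1).card) : ℝ) : EReal) ≤ ∑ i ∈ s, vF cF (r i) := by
  calc ((-(cF * (s.filter fun i => r i = 1).card) : ℝ) : EReal)
      = ∑ i ∈ s, ((if r i = 1 then -cF else 0 : ℝ) : EReal) := by
        rw [← EReal.coe_finset_sum, sum_ite, sum_const, sum_const_zero, nsmul_eq_mul]
        congr 1
        ring
    _ ≤ ∑ i ∈ s, vF cF (r i) := sum_le_sum fun i _ => ite_le_vF cF (r i)

lemma v1_eq_zero_of_ne {cS : ℝ} {p q : ℕ} {x : Pt} (hx : x.2 ≠ eS p q) : v1 cS p q x = 0 := by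
  rw [v1, if_neg]
  rintro ⟨k, rfl⟩
  exact hx rfl

lemma Vn_eq_add_sum_offDiag_sdiff {cF cS : ℝ} {p q : ℕ} {D D' : Finset Pt} (hD' : D' ⊆ D)
    (hv1 : ∀ x ∈ D, x ∉ D' → v1 cS p q x = 0) :
    Vn cF cS p q D =
      Vn cF cS p q D' + ∑ e ∈ D.offDiag \ D'.offDiag, vF cF (dE e.1 e.2) := by
  rw [Vn, Vn, ← sum_sdiff (offDiag_mono hD'), sum_subset hD' hv1]
  abel

theorem remove_top_line_general
    (cF cS : ℝ) (hcF : 0 < cF)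
    (p q : ℕ)
    (n : ℕ) (D : Finset Pt) (hD : D ∈ Cn p q n)
    (hhigh : ∃ x ∈ D, eS p q < x.2)
    (h : ℝ) (hmem : ∃ x ∈ D, x.2 = h) (hub : ∀ x ∈ D, x.2 ≤ h) :
    Vn cF cS p q D ≥
      Vn cF cS p q (D.filter fun x => x.2 ≠ h) -
        (((6 * cF * ((((D.filter fun x => x.2 = h).card - 1 : ℕ)) : ℝ) + 4 * cF) : ℝ) : EReal) := by
  obtain ⟨x₀, hx₀, rfl⟩ := hmem
  have hL : (D.filter fun x => x.2 = x₀.2).Nonempty := ⟨x₀, mem_filter.2 ⟨hx₀, rfl⟩⟩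
  have heS : eS p q < x₀.2 := by
    obtain ⟨z, hz, hz2⟩ := hhigh
    exact hz2.trans_le (hub z hz)
  have hv1 : ∀ x ∈ D, x ∉ D.filter (fun x => x.2 ≠ x₀.2) → v1 cS p q x = 0 := fun x hx hx' =>
    v1_eq_zero_of_ne <| by
      rw [mem_filter, not_and, not_not] at hx'
      exact (hx' hx).symm ▸ heS.ne'
  have hcount := card_bonds_meeting_top_line_le hD.1 hub hL
  rw [Vn_eq_add_sum_offDiag_sdiff (filter_subset _ D) hv1, ge_iff_le, sub_eq_add_neg,
    ← EReal.coe_neg]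
  gcongr
  refine le_trans ?_ (sum_vF_ge cF _ _)
  rw [EReal.coe_le_coe_iff, neg_le_neg_iff]
  calc _ ≤ cF * ((6 * ((D.filter fun x => x.2 = x₀.2).card - 1) + 4 : ℕ) : ℝ) :=
        mul_le_mul_of_nonneg_left (by exact_mod_cast hcount) hcF.le
    _ = _ := by push_cast; ring

/-- removing the topmost occupied horizontal line `L` (at height
`h > e_S`, with `ℓ` atoms) decreases the energy by at most `6c_F(ℓ-1) + 4c_F`. -/
theorem remove_top_line
    (cF cS : ℝ) (hcF : 0 < cF) (hcS : 0 < cS)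
    (p q : ℕ) (hp : 0 < p) (hq : 0 < q) (hpq : Nat.Coprime p q)
    (n : ℕ) (D : Finset Pt) (hD : D ∈ Cn p q n)
    (hhigh : ∃ x ∈ D, eS p q < x.2)
    (h : ℝ) (hmem : ∃ x ∈ D, x.2 = h) (hub : ∀ x ∈ D, x.2 ≤ h) :
    Vn cF cS p q D ≥
      Vn cF cS p q (D.filter fun x => x.2 ≠ h) -
        (((6 * cF * ((((D.filter fun x => x.2 = h).card - 1 : ℕ)) : ℝ) + 4 * cF) : ℝ) : EReal) :=
  remove_top_line_general cF cS hcF p q n D hD hhigh h hmem hub
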